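/- arXiv:2404.00598 — 2 statements merged into one kernel-verified Lean document; each statement's English description precedes it below -/
import Mathlib

section
/- Let φ̄₁, …, φ̄_N be i.i.d. uniform on [-π/2^B, π/2^B] and let Φ̄ = diag(e^{jφ̄₁}, …, e^{jφ̄_N}). Then for any fixed complex N×N matrix A, E[Φ̄ A Φ̄^H] = ε² A + (1-ε²) D(A), where ε = sin(π/2^B)/(π/2^B) and D(A) is the diagonal matrix with the same diagonal entries as A. -/
open MeasureTheory Real

lemma pi_prod_integral {ι : Type*} [Fintype ι] {α : Type*} [MeasurableSpace α]
    (μ : Measure α) [SigmaFinite μ] (f : ι → α → ℂ) :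
    ∫ x : ι → α, ∏ i, f i (x i) ∂(Measure.pi fun _ : ι => μ) = ∏ i, ∫ x, f i x ∂μ := by
  letI : MeasureSpace α := ⟨μ⟩
  letI : SigmaFinite (volume : Measure α) := ‹_›
  exact MeasureTheory.integral_fintype_prod_eq_prod (μ := fun _ => μ) f

lemma marginal_exp (B : ℕ) (μ1 : Measure ℝ)
    (hμ1 : μ1 = (volume (Set.Icc (-(π / 2 ^ B)) (π / 2 ^ B)))⁻¹ •
        volume.restrict (Set.Icc (-(π / 2 ^ B)) (π / 2 ^ B))) (c : ℂ)
    (hc : c = Complex.I ∨ c = -Complex.I) :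
    ∫ x : ℝ, Complex.exp (c * x) ∂μ1 =
      ((Real.sin (π / 2 ^ B) / (π / 2 ^ B) : ℝ) : ℂ) := by
  set a : ℝ := π / 2 ^ B with ha
  have hapos : 0 < a := div_pos Real.pi_pos (by positivity)
  have hvol : volume (Set.Icc (-a) a) = ENNReal.ofReal (2 * a) := by
    rw [Real.volume_Icc]; ring_nf
  have hcne : c ≠ 0 := by rcases hc with h | h <;> simp [h, Complex.I_ne_zero]
  have hint : ∫ x in Set.Icc (-a) a, Complex.exp (c * x) =
      (2 * Real.sin a : ℝ) := by
    rw [MeasureTheory.integral_Icc_eq_integral_Ioc,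
      ← intervalIntegral.integral_of_le (by linarith : -a ≤ a),
      integral_exp_mul_complex hcne]
    rcases hc with h | h <;> subst h <;>
    · rw [div_eq_iff hcne]
      push_cast [Complex.ofReal_sin]
      rw [Complex.sin]
      ring_nf
      rw [Complex.I_sq]
      ring
  rw [hμ1, integral_smul_measure, hvol, hint]
  have h2a : (0:ℝ) < 2 * a := by linarith
  rw [ENNReal.toReal_inv, ENNReal.toReal_ofReal h2a.le]
  rw [Complex.real_smul]
  push_cast
  field_simp

theorem stmt_4 (B N : ℕ) (hB : 1 ≤ B) (A : Matrix (Fin N) (Fin N) ℂ)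
    (μ1 : Measure ℝ)
    (hμ1 : μ1 = (volume (Set.Icc (-(π / 2 ^ B)) (π / 2 ^ B)))⁻¹ •
        volume.restrict (Set.Icc (-(π / 2 ^ B)) (π / 2 ^ B)))
    (ε : ℝ) (hε : ε = Real.sin (π / 2 ^ B) / (π / 2 ^ B)) :
    ∀ i j : Fin N,
      ∫ φ : Fin N → ℝ,
          ((Matrix.diagonal fun n => Complex.exp (Complex.I * φ n)) * A *
              (Matrix.conjTranspose (Matrix.diagonal fun n => Complex.exp (Complex.I * φ n)))) i j
          ∂(Measure.pi fun _ : Fin N => μ1) =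
        ((ε ^ 2 : ℝ) : ℂ) * A i j +
          ((1 - ε ^ 2 : ℝ) : ℂ) * (Matrix.diagonal fun n => A n n) i j := by
  set a : ℝ := π / 2 ^ B with ha
  have hapos : 0 < a := div_pos Real.pi_pos (by positivity)
  haveI hP : IsProbabilityMeasure μ1 := by
    constructor
    rw [hμ1, Measure.smul_apply, Measure.restrict_apply MeasurableSet.univ,
      Set.univ_inter, smul_eq_mul, Real.volume_Icc]
    rw [ENNReal.inv_mul_cancel] <;> simp [ENNReal.ofReal_eq_zero] <;> linarith
  haveI : IsProbabilityMeasure (Measure.pi fun _ : Fin N => μ1) := by infer_instance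
  have hentry : ∀ (i j : Fin N) (φ : Fin N → ℝ),
      ((Matrix.diagonal fun n => Complex.exp (Complex.I * φ n)) * A *
        (Matrix.conjTranspose (Matrix.diagonal fun n => Complex.exp (Complex.I * φ n)))) i j =
      Complex.exp (Complex.I * φ i) * A i j * Complex.exp (-(Complex.I * φ j)) := by
    intro i j φ
    rw [Matrix.diagonal_conjTranspose, Matrix.mul_diagonal, Matrix.diagonal_mul]
    congr 1
    simp [Pi.star_apply, ← Complex.exp_conj, map_mul, Complex.conj_I, Complex.conj_ofReal]
  intro i j
  by_cases hij : i = j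
  · subst hij
    have : (fun φ : Fin N → ℝ =>
        ((Matrix.diagonal fun n => Complex.exp (Complex.I * φ n)) * A *
          (Matrix.conjTranspose (Matrix.diagonal fun n => Complex.exp (Complex.I * φ n)))) i i) =
        fun _ => A i i := by
      funext φ
      rw [hentry]
      rw [mul_comm (Complex.exp _) (A i i), mul_assoc, ← Complex.exp_add]
      simp
    rw [this, integral_const]
    simp [Matrix.diagonal_apply_eq]
    push_cast
    ring
  · set g : Fin N → ℝ → ℂ := fun n x =>
      (if n = i then Complex.exp (Complex.I * x) else 1) *
      (if n = j then Complex.exp (-(Complex.I * x)) else 1) with hg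
    have key : (fun φ : Fin N → ℝ =>
        ((Matrix.diagonal fun n => Complex.exp (Complex.I * φ n)) * A *
          (Matrix.conjTranspose (Matrix.diagonal fun n => Complex.exp (Complex.I * φ n)))) i j) =
        fun φ => A i j * ∏ n, g n (φ n) := by
      funext φ
      rw [hentry, hg]
      simp only []
      rw [Finset.prod_mul_distrib, Finset.prod_ite_eq', Finset.prod_ite_eq']
      simp
      ring
    rw [key, integral_const_mul, pi_prod_integral]
    have hgint : ∀ n, ∫ x, g n x ∂μ1 =
        (if n = i then ((ε : ℝ) : ℂ) else 1) * (if n = j then ((ε : ℝ) : ℂ) else 1) := by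
      intro n
      by_cases h1 : n = i
      · subst h1
        simp only [hg, if_pos rfl, if_neg hij, mul_one]
        rw [hε]
        exact marginal_exp B μ1 hμ1 Complex.I (Or.inl rfl)
      · by_cases h2 : n = j
        · simp only [hg, if_neg h1, if_pos h2, one_mul]
          rw [hε]
          have := marginal_exp B μ1 hμ1 (-Complex.I) (Or.inr rfl)
          simp only [neg_mul] at this
          exact this
        · simp [hg, if_neg h1, if_neg h2]
    simp only [hgint]
    rw [Finset.prod_mul_distrib, Finset.prod_ite_eq', Finset.prod_ite_eq']
    simp [Matrix.diagonal_apply_ne _ hij]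
    push_cast
    ring
end

section
/- Let u* = √N (γ − 0.5·1)/‖2γ − 1‖₂ + 0.5·1 for γ ∈ [0,1]^N with γ ≠ 0.5·1. Then ‖2u* − 1‖₂² = N, and (2γ − 1)ᵀ(2u* − 1) = N if and only if γ ∈ {0,1}^N. -/
/-!
Put `v = 2γ - 1` and `S = ‖v‖²`, which is positive since `γ ≠ ½·1`. Then `2u* - 1 = (√N / √S) v`,
so `‖2u* - 1‖² = N` and `vᵀ(2u* - 1) = √N √S`. The box constraint gives `v_i² ≤ 1`, hence
`S ≤ N`, with equality exactly when every `v_i = ±1`, i.e. `γ ∈ {0,1}^N`.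
-/

open Finset

section

variable {ι : Type*} [Fintype ι]

theorem sum_sq_mul_div_sqrt_sum_sq (a : ℝ) {v : ι → ℝ} (hv : ∑ j, v j ^ 2 ≠ 0) :
    ∑ i, (a * v i / √(∑ j, v j ^ 2)) ^ 2 = a ^ 2 := by
  have hS : √(∑ j, v j ^ 2) ^ 2 = ∑ j, v j ^ 2 :=
    Real.sq_sqrt (sum_nonneg fun j _ => sq_nonneg (v j))
  simp_rw [div_pow, mul_pow, ← sum_div, ← mul_sum, hS]
  field_simp

theorem sum_mul_mul_div_sqrt_sum_sq (a : ℝ) (v : ι → ℝ) :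
    ∑ i, v i * (a * v i / √(∑ j, v j ^ 2)) = a * √(∑ j, v j ^ 2) := by
  calc ∑ i, v i * (a * v i / √(∑ j, v j ^ 2))
      = a * ((∑ i, v i ^ 2) / √(∑ j, v j ^ 2)) := by
        rw [sum_div, mul_sum]
        exact sum_congr rfl fun i _ => by ring
    _ = a * √(∑ j, v j ^ 2) := by rw [Real.div_sqrt]

theorem sum_eq_card_iff_of_le_one {f : ι → ℝ} (hf : ∀ i, f i ≤ 1) :
    ∑ i, f i = Fintype.card ι ↔ ∀ i, f i = 1 := by
  simpa using sum_eq_sum_iff_of_le (s := univ) fun i _ => hf i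

end

theorem sqrt_mul_sqrt_eq_self_iff {a b : ℝ} (ha : 0 < a) (hb : 0 ≤ b) :
    √a * √b = a ↔ b = a := by
  conv_lhs => rhs; rw [← Real.mul_self_sqrt ha.le]
  rw [mul_right_inj' (Real.sqrt_pos.mpr ha).ne', Real.sqrt_inj hb ha.le]

theorem sq_two_mul_sub_one_le_one {x : ℝ} (h₀ : 0 ≤ x) (h₁ : x ≤ 1) : (2 * x - 1) ^ 2 ≤ 1 := by
  nlinarith

theorem sq_two_mul_sub_one_eq_one_iff {x : ℝ} : (2 * x - 1) ^ 2 = 1 ↔ x = 0 ∨ x = 1 := by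
  rw [sq_eq_one_iff, or_comm]
  refine or_congr ?_ ?_ <;> constructor <;> intro h <;> linarith

theorem stmt_18 (N : ℕ) (γ : Fin N → ℝ)
    (hγbox : ∀ i, 0 ≤ γ i ∧ γ i ≤ 1)
    (hγne : γ ≠ fun _ => (1/2 : ℝ))
    (ustar : Fin N → ℝ)
    (hustar : ustar = fun i =>
      Real.sqrt (N : ℝ) * (γ i - 1/2) / Real.sqrt (∑ j, (2 * γ j - 1) ^ 2) + 1/2) :
    ∑ i, (2 * ustar i - 1) ^ 2 = (N : ℝ) ∧
    ((∑ i, (2 * γ i - 1) * (2 * ustar i - 1)) = (N : ℝ) ↔ ∀ i, γ i = 0 ∨ γ i = 1) := by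
  obtain ⟨i₀, hi₀⟩ := Function.ne_iff.mp hγne
  have hN : (0 : ℝ) < N := by exact_mod_cast i₀.pos
  have hS : ∑ j, (2 * γ j - 1) ^ 2 ≠ 0 := by
    rw [Ne, sum_eq_zero_iff_of_nonneg fun j _ => sq_nonneg _]
    intro h
    exact hi₀ (by linarith [sq_eq_zero_iff.mp (h i₀ (mem_univ _))])
  have hu : ∀ i, 2 * ustar i - 1 = √N * (2 * γ i - 1) / √(∑ j, (2 * γ j - 1) ^ 2) := by
    intro i; subst hustar; ring
  simp_rw [hu, sum_mul_mul_div_sqrt_sum_sq,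
    sqrt_mul_sqrt_eq_self_iff hN (sum_nonneg fun j _ => sq_nonneg _)]
  refine ⟨by rw [sum_sq_mul_div_sqrt_sum_sq _ hS, Real.sq_sqrt hN.le], ?_⟩
  have h := sum_eq_card_iff_of_le_one fun i => sq_two_mul_sub_one_le_one (hγbox i).1 (hγbox i).2
  simpa only [Fintype.card_fin, sq_two_mul_sub_one_eq_one_iff] using h
end
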